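/- Let γ ≥ 1 be an integer and set p := 1 + νγ. Then Coeff_{q^γ}( Res_{w=0}( − ((1+w)^n − w^n)/(w^{n−r−1} ∏_{k=1}^r(d_k w+1)) · ( 1 − ∑_{β≥0} ∑_{l=0}^{p−νβ} c̃_{p,l}^{(β)} q^β w^{−(p−νβ−l)} ) ) ) = Res_{w=0}( (1+w)^n (c̃_{p,0}^{(γ)} + c̃_{p,1}^{(γ)} w) / (w^{n−r} ∏_{k=1}^r(d_k w+1)) ), where both sides are rational numbers, the rational prefactors are expanded as Laurent series at w = 0 (∏_k(d_k w+1) has constant term 1), and Res_{w=0} extracts the coefficient of w^{−1} in each q-coefficient. -/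

import Mathlib

/-- The Laurent-series variable `w`. -/
noncomputable def Zl : LaurentSeries ℚ := HahnSeries.single (1 : ℤ) (1 : ℚ)

/-- `Res_{w=0}`: in each q-coefficient take the coefficient of `w⁻¹`. -/
noncomputable def resH (f : PowerSeries (LaurentSeries ℚ)) : PowerSeries ℚ :=
  PowerSeries.mk fun β => (PowerSeries.coeff (R := LaurentSeries ℚ) β f).coeff (-1)

/-- The coefficients `c_{p,l}^{(β)}`. -/
noncomputable def ccoef (n r : ℕ) (d : Fin r → ℕ) (p β : ℕ) (l : ℤ) : ℚ :=
  if l < 0 then 0 else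
    PowerSeries.coeff (R := ℚ) l.toNat
      (((PowerSeries.X + (β : PowerSeries ℚ)) ^ p *
          ∏ k : Fin r, ∏ i ∈ Finset.range (d k * β),
            ((d k : PowerSeries ℚ) * PowerSeries.X + ((i + 1 : ℕ) : PowerSeries ℚ))) *
        (∏ j ∈ Finset.range β, (PowerSeries.X + ((j + 1 : ℕ) : PowerSeries ℚ)) ^ n)⁻¹)

/-!
Because `γ ≥ 1` and `p - νγ = 1`, the `q^γ`-coefficient of `1 - Sp` is `-(c̃₀ w⁻¹ + c̃₁)`.
Writing `g = c̃₀ + c̃₁ w` and `P = ∏ₖ (dₖ w + 1)`, the integrand on the left is then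
`(1 + w)ⁿ g / (w^(n-r) P) - w^r g / P`, and the second term is a power series in `w`
(as `r < n`), so it has no residue.
-/

open PowerSeries

theorem div_mul_inv_mul_eq_sub {K : Type*} [Field K] {x y P g : K} (hx : x ≠ 0) (hP : P ≠ 0)
    {n r : ℕ} (hrn : r < n) :
    (y ^ n - x ^ n) / (x ^ (n - r - 1) * P) * (x⁻¹ * g) =
      y ^ n * g / (x ^ (n - r) * P) - x ^ r * (g * P⁻¹) := by
  obtain ⟨k, rfl⟩ := Nat.exists_eq_add_of_lt hrn
  rw [show r + k + 1 - r - 1 = k by omega, show r + k + 1 - r = k + 1 by omega]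
  field_simp
  ring

theorem LaurentSeries.coeff_neg_one_sub_coe {R : Type*} [Ring R] (f : LaurentSeries R)
    (φ : R⟦X⟧) : (f - φ).coeff (-1) = f.coeff (-1) := by
  simp [PowerSeries.coeff_coe]

theorem LaurentSeries.coe_inv {K : Type*} [Field K] {φ : K⟦X⟧} (hφ : constantCoeff φ ≠ 0) :
    ((φ⁻¹ : K⟦X⟧) : LaurentSeries K) = (φ : LaurentSeries K)⁻¹ := by
  refine (inv_eq_of_mul_eq_one_right ?_).symm
  rw [← PowerSeries.coe_mul, PowerSeries.mul_inv_cancel _ hφ, PowerSeries.coe_one]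

theorem Zl_eq_coe_X : Zl = ((X : ℚ⟦X⟧) : LaurentSeries ℚ) := PowerSeries.coe_X.symm

theorem Zl_ne_zero : Zl ≠ 0 := by
  simp [Zl]

theorem prod_mul_Zl_add_one_eq_coe {r : ℕ} (d : Fin r → ℕ) :
    ∏ k, ((d k : LaurentSeries ℚ) * Zl + 1) =
      ((∏ k, ((d k : ℚ⟦X⟧) * X + 1) : ℚ⟦X⟧) : LaurentSeries ℚ) := by
  simp [map_prod, Zl_eq_coe_X]

theorem single_zero_add_single_one_eq_coe (a b : ℚ) :
    HahnSeries.single (0 : ℤ) a + HahnSeries.single 1 b =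
      ((C a + C b * X : ℚ⟦X⟧) : LaurentSeries ℚ) := by
  rw [coe_add, coe_mul, coe_C, coe_C, PowerSeries.coe_X, HahnSeries.C_apply, HahnSeries.C_apply,
    HahnSeries.single_mul_single, zero_add, mul_one]

theorem single_neg_one_add_single_zero_eq_inv_Zl_mul (a b : ℚ) :
    HahnSeries.single (-1 : ℤ) a + HahnSeries.single 0 b =
      Zl⁻¹ * ((C a + C b * X : ℚ⟦X⟧) : LaurentSeries ℚ) := by
  rw [eq_inv_mul_iff_mul_eq₀ Zl_ne_zero, ← single_zero_add_single_one_eq_coe, Zl, mul_add,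
    HahnSeries.single_mul_single, HahnSeries.single_mul_single]
  norm_num

theorem stmt12_general (n r : ℕ) (d : Fin r → ℕ) (hd : ∀ k, 2 ≤ d k)
    (m : ℕ) (hm : m = ∑ k, d k)
    (ν : ℕ) (hmn : m < n)
    -- the coefficients c̃_{p,l}^{(β)}
    (ct : ℕ → ℤ → ℕ → ℚ)
    (γ : ℕ) (hγ : 1 ≤ γ) (p : ℕ) (hp : p = 1 + ν * γ)
    -- the series ∑_{β≥0} ∑_{l=0}^{p−νβ} c̃_{p,l}^{(β)} q^β w^{−(p−νβ−l)}
    (Sp : PowerSeries (LaurentSeries ℚ))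
    (hSp : ∀ β : ℕ, PowerSeries.coeff (R := LaurentSeries ℚ) β Sp =
      ∑ l ∈ Finset.Icc (0 : ℤ) ((p : ℤ) - (ν : ℤ) * (β : ℤ)),
        HahnSeries.single (-((p : ℤ) - (ν : ℤ) * (β : ℤ) - l)) (ct p l β)) :
    PowerSeries.coeff (R := ℚ) γ (resH (PowerSeries.C (R := LaurentSeries ℚ)
        (-(((1 + Zl) ^ n - Zl ^ n) /
            (Zl ^ (n - r - 1) * ∏ k : Fin r, ((d k : LaurentSeries ℚ) * Zl + 1)))) *
        (1 - Sp)))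
      = (((1 + Zl) ^ n *
            (HahnSeries.single (0 : ℤ) (ct p 0 γ) + HahnSeries.single (1 : ℤ) (ct p 1 γ))) /
          (Zl ^ (n - r) * ∏ k : Fin r, ((d k : LaurentSeries ℚ) * Zl + 1))).coeff (-1) := by
  have hrn : r < n := by
    have : 2 * r ≤ m := by
      simpa [hm, mul_comm] using Finset.sum_le_sum fun k (_ : k ∈ Finset.univ) => hd k
    omega
  set g : ℚ⟦X⟧ := C (ct p 0 γ) + C (ct p 1 γ) * X
  have hSγ : coeff γ Sp = Zl⁻¹ * g := by
    rw [hSp, show (p : ℤ) - ν * γ = 1 by rw [hp]; push_cast; ring,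
      show Finset.Icc (0 : ℤ) 1 = {0, 1} by decide, Finset.sum_pair (by decide),
      ← single_neg_one_add_single_zero_eq_inv_Zl_mul]
    norm_num
  set P : ℚ⟦X⟧ := ∏ k, ((d k : ℚ⟦X⟧) * X + 1)
  have hP : constantCoeff P ≠ 0 := by simp [P, map_prod]
  have hP' : (P : LaurentSeries ℚ) ≠ 0 :=
    (map_ne_zero_iff _ HahnSeries.ofPowerSeries_injective).mpr (ne_zero_of_map hP)
  have hPoly : Zl ^ r * ((g : LaurentSeries ℚ) * (P : LaurentSeries ℚ)⁻¹) =
      ((X ^ r * (g * P⁻¹) : ℚ⟦X⟧) : LaurentSeries ℚ) := by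
    rw [← LaurentSeries.coe_inv hP, Zl_eq_coe_X, coe_mul, coe_mul, coe_pow]
  rw [resH, coeff_mk, coeff_C_mul, map_sub, coeff_one, if_neg (by omega), hSγ, zero_sub,
    neg_mul_neg, prod_mul_Zl_add_one_eq_coe, div_mul_inv_mul_eq_sub Zl_ne_zero hP' hrn, hPoly,
    LaurentSeries.coeff_neg_one_sub_coe, single_zero_add_single_one_eq_coe]

theorem stmt12 (n r : ℕ) (hr : 1 ≤ r) (d : Fin r → ℕ) (hd : ∀ k, 2 ≤ d k)
    (m D : ℕ) (hm : m = ∑ k, d k) (hD : D = ∏ k, d k ^ d k)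
    (ν : ℕ) (hν : ν = n - m) (hmn : m < n)
    -- the coefficients c̃_{p,l}^{(β)}
    (ct : ℕ → ℤ → ℕ → ℚ)
    (hct0 : ∀ (p : ℕ) (l : ℤ), ct p l 0 = if l = (p : ℤ) then 1 else 0)
    (hctz : ∀ (p : ℕ) (l : ℤ) (β : ℕ),
      (l < 0 ∨ (p : ℤ) - (ν : ℤ) * (β : ℤ) < l) → ct p l β = 0)
    (hctrec : ∀ (p : ℕ) (l : ℤ) (β : ℕ), 1 ≤ β → 0 ≤ l → l ≤ (p : ℤ) - (ν : ℤ) * (β : ℤ) →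
      ct p l β = -∑ β₁ ∈ Finset.range β, ∑ k ∈ Finset.Icc (0 : ℤ) ((p : ℤ) - (ν : ℤ) * (β₁ : ℤ)),
        ct p k β₁ * ccoef n r d k.toNat (β - β₁) l)
    (γ : ℕ) (hγ : 1 ≤ γ) (p : ℕ) (hp : p = 1 + ν * γ)
    -- the series ∑_{β≥0} ∑_{l=0}^{p−νβ} c̃_{p,l}^{(β)} q^β w^{−(p−νβ−l)}
    (Sp : PowerSeries (LaurentSeries ℚ))
    (hSp : ∀ β : ℕ, PowerSeries.coeff (R := LaurentSeries ℚ) β Sp =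
      ∑ l ∈ Finset.Icc (0 : ℤ) ((p : ℤ) - (ν : ℤ) * (β : ℤ)),
        HahnSeries.single (-((p : ℤ) - (ν : ℤ) * (β : ℤ) - l)) (ct p l β)) :
    PowerSeries.coeff (R := ℚ) γ (resH (PowerSeries.C (R := LaurentSeries ℚ)
        (-(((1 + Zl) ^ n - Zl ^ n) /
            (Zl ^ (n - r - 1) * ∏ k : Fin r, ((d k : LaurentSeries ℚ) * Zl + 1)))) *
        (1 - Sp)))
      = (((1 + Zl) ^ n *
            (HahnSeries.single (0 : ℤ) (ct p 0 γ) + HahnSeries.single (1 : ℤ) (ct p 1 γ))) /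
          (Zl ^ (n - r) * ∏ k : Fin r, ((d k : LaurentSeries ℚ) * Zl + 1))).coeff (-1) :=
  stmt12_general n r d hd m hm ν hmn ct γ hγ p hp Sp hSp
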